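/- If β_λ > 1, β_p > 1 and β_c > 1, then there exists a constant C > 0 (depending only on β_λ, β_p, β_c) such that for all integers N ≥ 2 and all integers u_λ ≥ 1 and 1 ≤ u_p, u_c ≤ √N, the heavy-tailed (1+(λ,λ)) GA maximizing LeadingOnes on {0,1}^N satisfies E[T_I] ≤ C·N², where T_I is the first iteration index t ≥ 0 at which the current solution x_t is the all-ones string. -/

import Mathlib

open Finset
open scoped ENNReal Classical

/-- Probability mass function of the power-law distribution `pow(β,u)` on `[1..u]`:
`Pr[X = i] = C_{β,u} · i^(-β)` for `i ∈ [1..u]`, where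
`C_{β,u} = (∑_{j=1}^{u} j^(-β))⁻¹`. -/
noncomputable def powMass (β : ℝ) (u : ℕ) (i : ℕ) : ℝ≥0∞ :=
  if i ∈ Finset.Icc 1 u then
    ENNReal.ofReal ((∑ j ∈ Finset.Icc 1 u, (j : ℝ) ^ (-β))⁻¹ * (i : ℝ) ^ (-β))
  else 0

/-- Probability mass function of the binomial distribution `Bin(N,p)`. -/
noncomputable def binomMass (N : ℕ) (p : ℝ) (ℓ : ℕ) : ℝ≥0∞ :=
  if ℓ ≤ N then ENNReal.ofReal ((N.choose ℓ : ℝ) * p ^ ℓ * (1 - p) ^ (N - ℓ)) else 0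

/-- Probability mass at `z` of a mutation offspring of `x`: flip the bits of `x`
in a uniformly random `ℓ`-element set of positions.  The offspring `z` arises iff
it differs from `x` in exactly `ℓ` positions, and then with probability
`1 / (N choose ℓ)`. -/
noncomputable def mutMass {N : ℕ} (x : Fin N → Bool) (ℓ : ℕ) (z : Fin N → Bool) : ℝ≥0∞ :=
  if (Finset.univ.filter fun i => z i ≠ x i).card = ℓ then ((N.choose ℓ : ℝ≥0∞))⁻¹ else 0

/-- Probability mass at `z` of a crossover offspring of `x` and `x'` with crossover
bias `c`: independently for every position, take the bit of `x'` with probability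
`c` and the bit of `x` with probability `1 - c`. -/
noncomputable def crossMass {N : ℕ} (x x' : Fin N → Bool) (c : ℝ) (z : Fin N → Bool) : ℝ≥0∞ :=
  ∏ i : Fin N,
    ((if z i = x' i then ENNReal.ofReal c else 0) +
      (if z i = x i then ENNReal.ofReal (1 - c) else 0))

/-- Probability mass at `z` of the winner among `lam` independent samples from the
mass function `q`, where a winner is an offspring of maximal `f`-value, ties broken
uniformly at random. -/
noncomputable def bestOfMass {σ : Type*} [Fintype σ] (f : σ → ℝ) (lam : ℕ)
    (q : σ → ℝ≥0∞) (z : σ) : ℝ≥0∞ :=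
  ∑' w : Fin lam → σ, (∏ j, q (w j)) *
    (((Finset.univ.filter fun j => w j = z ∧ ∀ j', f (w j') ≤ f (w j)).card : ℝ≥0∞) /
      ((Finset.univ.filter fun j => ∀ j', f (w j') ≤ f (w j)).card : ℝ≥0∞))

/-- Transition probability of one iteration of the heavy-tailed `(1+(λ,λ))` GA
maximizing `f : {0,1}^N → ℝ` with hyperparameters `βl, ul, βp, up, βc, uc`, from
current solution `x` to next solution `y`: sample `P ~ pow(βp,up)`,
`Q ~ pow(βc,uc)`, `λ ~ pow(βl,ul)` independently, set `p = P/√N`, `c = Q/√N`,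
sample `ℓ ~ Bin(N,p)`; create `λ` mutation offspring (each flipping a fresh
uniformly random `ℓ`-element set of bits of `x`) and let `x'` be a best one (ties
uniform); create `λ` crossover offspring of `x` and `x'` with bias `c` and let
`yw` be a best one (ties uniform); accept `yw` iff `f(yw) ≥ f(x)`. -/
noncomputable def gaStep (N : ℕ) (βl βp βc : ℝ) (ul up uc : ℕ)
    (f : (Fin N → Bool) → ℝ) (x y : Fin N → Bool) : ℝ≥0∞ :=
  ∑' (P : ℕ) (Q : ℕ) (lam : ℕ) (ℓ : ℕ),
    powMass βp up P * powMass βc uc Q * powMass βl ul lam *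
      binomMass N ((P : ℝ) / Real.sqrt N) ℓ *
      ∑' x' : Fin N → Bool, bestOfMass f lam (mutMass x ℓ) x' *
        ∑' yw : Fin N → Bool,
          bestOfMass f lam (crossMass x x' ((Q : ℝ) / Real.sqrt N)) yw *
            (if f x ≤ f yw then (if y = yw then 1 else 0) else (if y = x then 1 else 0))

/-- Distribution of the current solution `x_t` of the heavy-tailed `(1+(λ,λ))` GA
after `t` iterations: `x_0` is uniformly random in `{0,1}^N`, and each iteration
performs `gaStep`. -/
noncomputable def gaMarginal (N : ℕ) (βl βp βc : ℝ) (ul up uc : ℕ)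
    (f : (Fin N → Bool) → ℝ) : ℕ → (Fin N → Bool) → ℝ≥0∞
  | 0 => fun _ => ((2 : ℝ≥0∞) ^ N)⁻¹
  | t + 1 => fun y =>
      ∑' x : Fin N → Bool, gaMarginal N βl βp βc ul up uc f t x * gaStep N βl βp βc ul up uc f x y

/-- Expected number of iterations `E[T_I]` until the current solution of the GA
lies in the (absorbing) set of good solutions, computed as
`∑_{t≥0} Pr[x_t not good]`. -/
noncomputable def gaExpectedIterations (N : ℕ) (βl βp βc : ℝ) (ul up uc : ℕ)
    (f : (Fin N → Bool) → ℝ) (good : (Fin N → Bool) → Prop) : ℝ≥0∞ :=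
  ∑' t : ℕ, ∑' x : Fin N → Bool,
    if good x then 0 else gaMarginal N βl βp βc ul up uc f t x

/-- The LeadingOnes fitness: the number of leading one-bits of `x ∈ {0,1}^N`. -/
noncomputable def leadingOnes (N : ℕ) (x : Fin N → Bool) : ℝ :=
  ((Finset.univ.filter fun i => ∀ j : Fin N, j ≤ i → x j = true).card : ℝ)

/-!
The fitness-level method. Group the bit strings by their number `k < N` of leading ones. The GA
is elitist, so it never returns to a lower level, and from level `k` it climbs with probability at
least `δ = 1 / (16 N Z_p Z_c Z_λ)`, where `Z_β = ∑ n^(-β)` bounds the normalising constants of the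
power laws: with probability at least `1 / (Z_p Z_c Z_λ)` it samples `P = Q = λ = 1`, so
`p = c = 1 / √N`; then the mutation flips the first zero with probability `ℓ / N`, and the
crossover keeps that bit and rejects the other `ℓ - 1` flips with probability at least
`c (1 - c) ^ ℓ`. Averaging over `ℓ ~ Bin(N, p)` gives `c² (1 - c) (1 - c²)^(N - 1) ≥ 1 / (16 N)`.
Hence the expected time spent on each level is at most `1 / δ`, and `E[T_I] ≤ N / δ = C N²`.
-/

theorem ENNReal.tsum_tsum_mul_le_one {ι κ : Type*} {p : ι → ℝ≥0∞} {F : ι → κ → ℝ≥0∞}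
    (hp : ∑' i, p i ≤ 1) (hF : ∀ i, p i ≠ 0 → ∑' y, F i y ≤ 1) :
    ∑' y, ∑' i, p i * F i y ≤ 1 := by
  rw [ENNReal.tsum_comm]
  simp_rw [ENNReal.tsum_mul_left]
  refine le_trans (ENNReal.tsum_le_tsum fun i => ?_) hp
  by_cases hi : p i = 0
  · simp [hi]
  · exact mul_le_of_le_one_right' (hF i hi)

section PowerLaw

/-- An upper bound, uniform in `u`, for `C_{β,u}⁻¹` (the `n = 0` term is `0 ^ (-β) = 0`). -/
noncomputable def powLawNorm (β : ℝ) : ℝ := ∑' n : ℕ, (n : ℝ) ^ (-β)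

variable {β : ℝ} {u : ℕ}

theorem sum_Icc_rpow_neg_le_powLawNorm (hβ : 1 < β) (u : ℕ) :
    ∑ j ∈ Icc 1 u, (j : ℝ) ^ (-β) ≤ powLawNorm β :=
  (Real.summable_nat_rpow.2 (by linarith)).sum_le_tsum _ fun i _ => by positivity

theorem one_le_sum_Icc_rpow_neg (hu : 1 ≤ u) : 1 ≤ ∑ j ∈ Icc 1 u, (j : ℝ) ^ (-β) := by
  simpa using single_le_sum (f := fun j : ℕ => (j : ℝ) ^ (-β)) (fun i _ => by positivity)
    (mem_Icc.2 ⟨le_rfl, hu⟩)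

theorem one_le_powLawNorm (hβ : 1 < β) : 1 ≤ powLawNorm β :=
  (one_le_sum_Icc_rpow_neg le_rfl).trans (sum_Icc_rpow_neg_le_powLawNorm hβ 1)

theorem tsum_powMass_le_one (β : ℝ) (u : ℕ) : ∑' i, powMass β u i ≤ 1 := by
  rw [tsum_eq_sum (s := Icc 1 u) fun i hi => by simp [powMass, hi]]
  have hnn : ∀ i ∈ Icc 1 u, 0 ≤ (∑ j ∈ Icc 1 u, (j : ℝ) ^ (-β))⁻¹ * (i : ℝ) ^ (-β) :=
    fun i _ => by positivity
  rw [sum_congr rfl fun i hi => by rw [powMass, if_pos hi], ← ENNReal.ofReal_sum_of_nonneg hnn,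
    ← mul_sum, ← ENNReal.ofReal_one]
  exact ENNReal.ofReal_le_ofReal inv_mul_le_one

theorem ofReal_inv_powLawNorm_le_powMass_one (hβ : 1 < β) (hu : 1 ≤ u) :
    ENNReal.ofReal (powLawNorm β)⁻¹ ≤ powMass β u 1 := by
  rw [powMass, if_pos (mem_Icc.2 ⟨le_rfl, hu⟩), Nat.cast_one, Real.one_rpow, mul_one]
  exact ENNReal.ofReal_le_ofReal <| inv_anti₀ (by linarith [one_le_sum_Icc_rpow_neg (β := β) hu])
    (sum_Icc_rpow_neg_le_powLawNorm hβ u)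

theorem div_sqrt_le_one_of_powMass_ne_zero {i N : ℕ} (hi : powMass β u i ≠ 0)
    (hu : (u : ℝ) ≤ Real.sqrt N) : (i : ℝ) / Real.sqrt N ≤ 1 := by
  have hiu : i ≤ u := by
    by_contra h
    exact hi (if_neg fun h' => h (mem_Icc.1 h').2)
  exact div_le_one_of_le₀ ((Nat.cast_le.2 hiu).trans hu) (Real.sqrt_nonneg _)

end PowerLaw

theorem tsum_binomMass_le_one {N : ℕ} {p : ℝ} (h0 : 0 ≤ p) (h1 : p ≤ 1) :
    ∑' ℓ, binomMass N p ℓ ≤ 1 := by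
  rw [tsum_eq_sum (s := range (N + 1)) fun ℓ hℓ => by
    simp [binomMass, Nat.not_le.2 (not_lt.1 (mem_range.not.1 hℓ))]]
  have hnn : ∀ ℓ ∈ range (N + 1), 0 ≤ (N.choose ℓ : ℝ) * p ^ ℓ * (1 - p) ^ (N - ℓ) :=
    fun ℓ _ => mul_nonneg (by positivity) (pow_nonneg (by linarith) _)
  rw [sum_congr rfl fun ℓ hℓ => by rw [binomMass, if_pos (Nat.lt_succ_iff.1 (mem_range.1 hℓ))],
    ← ENNReal.ofReal_sum_of_nonneg hnn]
  have hsum := (add_pow p (1 - p) N).symm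
  rw [add_sub_cancel, one_pow] at hsum
  rw [(sum_congr rfl fun ℓ _ => by ring).trans hsum, ENNReal.ofReal_one]

section BinomialSums

theorem sum_range_mul_choose_mul_pow (N : ℕ) (a q : ℝ) :
    ∑ ℓ ∈ range (N + 1), (ℓ : ℝ) * N.choose ℓ * a ^ ℓ * q ^ (N - ℓ) =
      N * a * (a + q) ^ (N - 1) := by
  rcases N with _ | M
  · simp
  rw [sum_range_succ', Nat.add_sub_cancel, add_pow, mul_sum]
  simp only [Nat.cast_zero, zero_mul, add_zero]
  refine sum_congr rfl fun i _ => ?_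
  have h := congrArg (Nat.cast (R := ℝ)) (Nat.add_one_mul_choose_eq M i)
  rw [Nat.add_sub_add_right, pow_succ]
  push_cast at h ⊢
  linear_combination (a * a ^ i * q ^ (M - i)) * h.symm

theorem sum_binom_mul_success_eq {N : ℕ} (hN : 1 ≤ N) (c : ℝ) :
    ∑ ℓ ∈ range (N + 1), (N.choose ℓ : ℝ) * c ^ ℓ * (1 - c) ^ (N - ℓ) *
        ((ℓ : ℝ) / N * (c * (1 - c) ^ ℓ)) = c ^ 2 * (1 - c) * (1 - c ^ 2) ^ (N - 1) := by
  have hN0 : (N : ℝ) ≠ 0 := Nat.cast_ne_zero.2 (by omega)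
  calc _ = c / N * ∑ ℓ ∈ range (N + 1), (ℓ : ℝ) * N.choose ℓ * (c * (1 - c)) ^ ℓ *
        (1 - c) ^ (N - ℓ) := by
        rw [mul_sum]
        exact sum_congr rfl fun ℓ _ => by rw [mul_pow]; ring
    _ = _ := by
        rw [sum_range_mul_choose_mul_pow]
        field_simp
        ring

theorem one_add_inv_pow_le_four (n : ℕ) : (1 + 1 / (n : ℝ)) ^ n ≤ 4 := by
  rcases Nat.eq_zero_or_pos n with rfl | hn
  · norm_num
  calc (1 + 1 / (n : ℝ)) ^ n ≤ Real.exp (1 / n) ^ n := by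
        gcongr
        linarith [Real.add_one_le_exp (1 / (n : ℝ))]
    _ = Real.exp 1 := by rw [← Real.exp_nat_mul, mul_one_div_cancel (Nat.cast_ne_zero.2 hn.ne')]
    _ ≤ 4 := by linarith [Real.exp_one_lt_d9]

theorem one_div_four_le_one_sub_inv_pow (n : ℕ) : 1 / 4 ≤ (1 - 1 / (n : ℝ)) ^ (n - 1) := by
  rcases Nat.lt_or_ge n 2 with hn | hn
  · interval_cases n <;> norm_num
  obtain ⟨m, rfl⟩ : ∃ m, n = m + 1 := ⟨n - 1, by omega⟩
  have hm : (0 : ℝ) < m := by exact_mod_cast (by omega : 0 < m)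
  have hinv : (1 - 1 / ((m + 1 : ℕ) : ℝ)) * (1 + 1 / (m : ℝ)) = 1 := by
    push_cast
    field_simp
    ring
  have hprod := congrArg (· ^ m) hinv
  simp only [mul_pow, one_pow, Nat.add_sub_cancel] at hprod ⊢
  nlinarith [one_add_inv_pow_le_four m,
    pow_nonneg (sub_nonneg.2 (div_le_one_of_le₀ (by simp) (by positivity)) :
      (0 : ℝ) ≤ 1 - 1 / ((m + 1 : ℕ) : ℝ)) m]

theorem one_div_sixteen_mul_le_sum_binom_mul_success {N : ℕ} (hN : 2 ≤ N) :
    1 / (16 * (N : ℝ)) ≤ ∑ ℓ ∈ range (N + 1),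
      (N.choose ℓ : ℝ) * (1 / Real.sqrt N) ^ ℓ * (1 - 1 / Real.sqrt N) ^ (N - ℓ) *
        ((ℓ : ℝ) / N * (1 / Real.sqrt N * (1 - 1 / Real.sqrt N) ^ ℓ)) := by
  have hN2 : (2 : ℝ) ≤ N := by exact_mod_cast hN
  have hN0 : (0 : ℝ) < N := by positivity
  have hsq : (1 / Real.sqrt N) ^ 2 = 1 / N := by
    rw [div_pow, one_pow, Real.sq_sqrt hN0.le]
  have hc : 1 / Real.sqrt N ≤ 3 / 4 := by
    have h43 : (4 / 3 : ℝ) ≤ Real.sqrt N :=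
      Real.le_sqrt_of_sq_le (by norm_num; linarith)
    rw [div_le_div_iff₀ (by positivity) (by norm_num)]
    linarith
  rw [sum_binom_mul_success_eq (by omega), hsq]
  have h4 := one_div_four_le_one_sub_inv_pow N
  have hc' : 1 / 4 ≤ 1 - 1 / Real.sqrt N := by linarith
  calc 1 / (16 * (N : ℝ)) = 1 / N * (1 / 4) * (1 / 4) := by ring
    _ ≤ 1 / N * (1 - 1 / Real.sqrt N) * (1 - 1 / N) ^ (N - 1) := by gcongr

end BinomialSums

section Mutation

def flipEquiv {α : Type*} [Fintype α] [DecidableEq α] (x : α → Bool) : Finset α ≃ (α → Bool) where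
  toFun S i := if i ∈ S then !x i else x i
  invFun z := univ.filter fun i => z i ≠ x i
  left_inv S := by ext i; by_cases h : i ∈ S <;> simp [h]
  right_inv z := by funext i; cases hz : z i <;> cases hx : x i <;> simp [hz, hx]

variable {N : ℕ}

theorem mutMass_flipEquiv (x : Fin N → Bool) (ℓ : ℕ) (S : Finset (Fin N)) :
    mutMass x ℓ (flipEquiv x S) = if S.card = ℓ then ((N.choose ℓ : ℝ≥0∞))⁻¹ else 0 := by
  have hS : (univ.filter fun i => flipEquiv x S i ≠ x i) = S := (flipEquiv x).symm_apply_apply S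
  simp only [mutMass, hS]

theorem tsum_mutMass_le_one (x : Fin N → Bool) (ℓ : ℕ) : ∑' z, mutMass x ℓ z ≤ 1 := by
  rw [tsum_fintype, ← (flipEquiv x).sum_comp]
  simp only [mutMass_flipEquiv, ← sum_filter, sum_const, nsmul_eq_mul]
  rw [← powerset_univ, ← powersetCard_eq_filter, card_powersetCard, card_univ, Fintype.card_fin]
  exact ENNReal.mul_inv_le_one _

theorem choose_le_card_filter_mem_card_eq {α : Type*} [Fintype α] [DecidableEq α] (κ : α)
    {ℓ : ℕ} (hℓ : 1 ≤ ℓ) :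
    (Fintype.card α - 1).choose (ℓ - 1) ≤
      (univ.filter fun S : Finset α => κ ∈ S ∧ S.card = ℓ).card := by
  have := card_le_card_of_injOn (insert κ) (s := powersetCard (ℓ - 1) (univ.erase κ))
    (t := univ.filter fun S : Finset α => κ ∈ S ∧ S.card = ℓ) ?_ ?_
  · rwa [card_powersetCard, card_erase_of_mem (mem_univ κ), card_univ] at this
  · intro D hD
    obtain ⟨hsub, hcard⟩ := mem_powersetCard.1 hD
    have hκ : κ ∉ D := fun h => by simpa using hsub h
    simp [card_insert_of_notMem hκ, hcard, Nat.sub_add_cancel hℓ]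
  · intro D₁ hD₁ D₂ hD₂ h
    have hκ : ∀ {D}, D ∈ (powersetCard (ℓ - 1) (univ.erase κ) : Set (Finset α)) → κ ∉ D :=
      fun hD h => by simpa using (mem_powersetCard.1 hD).1 h
    rw [← erase_insert (hκ hD₁), ← erase_insert (hκ hD₂)]
    exact congrArg (·.erase κ) h

theorem ofReal_div_le_sum_mutMass_ne (x : Fin N → Bool) (κ : Fin N) {ℓ : ℕ} (hℓ : ℓ ≤ N) :
    ENNReal.ofReal (ℓ / N) ≤ ∑ z ∈ univ.filter fun z => z κ ≠ x κ, mutMass x ℓ z := by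
  rcases Nat.eq_zero_or_pos ℓ with rfl | hℓ1
  · simp
  have hchoose : (ℓ : ℝ) / N = ((N - 1).choose (ℓ - 1) : ℝ) * ((N.choose ℓ : ℝ))⁻¹ := by
    obtain ⟨n, rfl⟩ : ∃ n, N = n + 1 := ⟨N - 1, by omega⟩
    obtain ⟨k, rfl⟩ : ∃ k, ℓ = k + 1 := ⟨ℓ - 1, by omega⟩
    have hpos : (0 : ℝ) < ((n + 1).choose (k + 1) : ℕ) := by exact_mod_cast Nat.choose_pos hℓ
    have h := Nat.add_one_mul_choose_eq n k
    simp only [Nat.add_sub_cancel]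
    field_simp
    exact_mod_cast (mul_comm _ _).trans h.symm
  rw [sum_filter, ← (flipEquiv x).sum_comp]
  have hflip : ∀ S, ((flipEquiv x S) κ ≠ x κ) ↔ κ ∈ S := fun S => by
    by_cases h : κ ∈ S <;> simp [flipEquiv, h]
  simp only [hflip, mutMass_flipEquiv, ← ite_and, ← sum_filter, sum_const, nsmul_eq_mul]
  rw [hchoose, ENNReal.ofReal_mul (by positivity), ENNReal.ofReal_natCast,
    ENNReal.ofReal_inv_of_pos (by exact_mod_cast Nat.choose_pos hℓ), ENNReal.ofReal_natCast]
  gcongr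
  simpa using choose_le_card_filter_mem_card_eq κ hℓ1

end Mutation

section Crossover

variable {N : ℕ} {c : ℝ}

theorem sum_bool_crossFactor (a a' : Bool) (hc0 : 0 ≤ c) (hc1 : c ≤ 1) :
    ∑ b : Bool, ((if b = a' then ENNReal.ofReal c else 0) +
      (if b = a then ENNReal.ofReal (1 - c) else 0)) = 1 := by
  simp [sum_add_distrib, ← ENNReal.ofReal_add hc0 (by linarith : 0 ≤ 1 - c)]

theorem tsum_crossMass_eq_one (x x' : Fin N → Bool) (hc0 : 0 ≤ c) (hc1 : c ≤ 1) :
    ∑' z, crossMass x x' c z = 1 := by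
  rw [tsum_fintype]
  unfold crossMass
  rw [← Fintype.prod_sum (fun i b => (if b = x' i then ENNReal.ofReal c else 0) +
    (if b = x i then ENNReal.ofReal (1 - c) else 0))]
  exact prod_eq_one fun i _ => sum_bool_crossFactor (x i) (x' i) hc0 hc1

/-- If `x'` differs from `x` in at most `ℓ` positions, among them the first zero `κ` of `x`, then
the crossover fills the prefix up to `κ` with ones whenever it takes bit `κ` from `x'` and every
other differing bit from `x`. -/
theorem ofReal_mul_pow_le_sum_crossMass (x x' : Fin N → Bool) (hc0 : 0 ≤ c) (hc1 : c ≤ 1)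
    {κ : Fin N} (hxκ : x κ = false) (hx : ∀ j < κ, x j = true) (hx'κ : x' κ = true) {ℓ : ℕ}
    (hℓ : (univ.filter fun i => x' i ≠ x i).card ≤ ℓ) :
    ENNReal.ofReal (c * (1 - c) ^ ℓ) ≤
      ∑ z ∈ univ.filter (fun z : Fin N → Bool => ∀ j ≤ κ, z j = true), crossMass x x' c z := by
  set t : ∀ _ : Fin N, Finset Bool := fun i => if i ≤ κ then {true} else univ
  have hcyl : Fintype.piFinset t = univ.filter fun z : Fin N → Bool => ∀ j ≤ κ, z j = true := by
    ext z
    simp only [Fintype.mem_piFinset, mem_filter, mem_univ, true_and, t]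
    refine forall_congr' fun j => ?_
    by_cases hj : j ≤ κ <;> simp [hj]
  set G : Fin N → ℝ≥0∞ := fun i => if i = κ then ENNReal.ofReal c
    else if x' i ≠ x i then ENNReal.ofReal (1 - c) else 1
  have hfactor : ∀ i, G i ≤ ∑ b ∈ t i, ((if b = x' i then ENNReal.ofReal c else 0) +
      (if b = x i then ENNReal.ofReal (1 - c) else 0)) := by
    intro i
    rcases lt_trichotomy i κ with hi | rfl | hi
    · have hxi := hx i hi
      simp only [G, t, if_pos hi.le, hi.ne, if_false, sum_singleton, hxi]
      cases x' i <;> simp [← ENNReal.ofReal_add hc0 (by linarith : 0 ≤ 1 - c)]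
    · simp [G, t, hxκ, hx'κ]
    · simp only [G, t, if_neg hi.not_ge, hi.ne', if_false, sum_bool_crossFactor _ _ hc0 hc1]
      split_ifs
      exacts [ENNReal.ofReal_le_one.2 (by linarith), le_rfl]
  have hprodG : ENNReal.ofReal (c * (1 - c) ^ ℓ) ≤ G κ * ∏ i ∈ univ.erase κ, G i := by
    rw [prod_congr rfl fun i hi => if_neg (ne_of_mem_erase hi), prod_ite, prod_const,
      prod_const_one, mul_one, ENNReal.ofReal_mul hc0, ENNReal.ofReal_pow (by linarith)]
    simp only [G, if_true]
    exact mul_le_mul_right (pow_le_pow_of_le_one zero_le (ENNReal.ofReal_le_one.2 (by linarith))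
      ((card_le_card (filter_subset_filter _ (subset_univ _))).trans hℓ)) _
  rw [mul_prod_erase univ G (mem_univ κ)] at hprodG
  rw [← hcyl]
  exact hprodG.trans ((prod_le_prod' fun i _ => hfactor i).trans_eq (prod_univ_sum t _))

end Crossover

section Selection

variable {σ : Type*} [Fintype σ] (f : σ → ℝ)

theorem tsum_bestOfMass_le_one (lam : ℕ) {q : σ → ℝ≥0∞} (hq : ∑' z, q z ≤ 1) :
    ∑' z, bestOfMass f lam q z ≤ 1 := by
  classical
  have hwinner : ∀ w : Fin lam → σ,
      ∑ z, ((univ.filter fun j => w j = z ∧ ∀ j', f (w j') ≤ f (w j)).card : ℝ≥0∞) /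
        ((univ.filter fun j => ∀ j', f (w j') ≤ f (w j)).card : ℝ≥0∞) ≤ 1 := by
    intro w
    have hfiber : ∑ z, (univ.filter fun j => w j = z ∧ ∀ j', f (w j') ≤ f (w j)).card =
        (univ.filter fun j => ∀ j', f (w j') ≤ f (w j)).card := by
      rw [card_eq_sum_card_fiberwise (f := w) (t := univ) fun j _ => mem_univ _]
      simp only [filter_filter, and_comm]
    simp only [div_eq_mul_inv, ← sum_mul]
    rw [← Nat.cast_sum, hfiber]
    exact ENNReal.mul_inv_le_one _
  rw [tsum_fintype] at hq
  simp only [bestOfMass, tsum_fintype]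
  rw [sum_comm]
  calc ∑ w : Fin lam → σ, ∑ z, (∏ j, q (w j)) * _
      ≤ ∑ w : Fin lam → σ, ∏ j, q (w j) := sum_le_sum fun w _ => by
        rw [← mul_sum]; exact mul_le_of_le_one_right' (hwinner w)
    _ = (∑ z, q z) ^ lam := (Fintype.sum_pow _ _).symm
    _ ≤ 1 := pow_le_one₀ zero_le hq

theorem bestOfMass_one (q : σ → ℝ≥0∞) (z : σ) : bestOfMass f 1 q z = q z := by
  classical
  rw [bestOfMass, tsum_fintype, ← (Equiv.funUnique (Fin 1) σ).symm.sum_comp]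
  simp [Equiv.funUnique, apply_ite]

end Selection

section Step

variable {N : ℕ} {βl βp βc : ℝ} {ul up uc : ℕ} (f : (Fin N → Bool) → ℝ)

/-- Mass at `y` of the next solution when the current one is `x` and the winning crossover
offspring is `yw`. -/
noncomputable def acceptMass (x yw y : Fin N → Bool) : ℝ≥0∞ :=
  if f x ≤ f yw then (if y = yw then 1 else 0) else (if y = x then 1 else 0)

/-- The transition of one iteration with `λ = 1`, mutation strength `ℓ` and crossover bias `c`. -/
noncomputable def lambdaOneStep (x : Fin N → Bool) (ℓ : ℕ) (c : ℝ) (y : Fin N → Bool) : ℝ≥0∞ :=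
  ∑' x', mutMass x ℓ x' * ∑' yw, crossMass x x' c yw * acceptMass f x yw y

theorem gaStep_eq_nested (x y : Fin N → Bool) :
    gaStep N βl βp βc ul up uc f x y =
      ∑' P, powMass βp up P * ∑' Q, powMass βc uc Q * ∑' lam, powMass βl ul lam *
        ∑' ℓ, binomMass N ((P : ℝ) / Real.sqrt N) ℓ *
          ∑' x', bestOfMass f lam (mutMass x ℓ) x' *
            ∑' yw, bestOfMass f lam (crossMass x x' ((Q : ℝ) / Real.sqrt N)) yw *
              acceptMass f x yw y := by
  simp only [gaStep, acceptMass, mul_assoc, ENNReal.tsum_mul_left]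

theorem tsum_gaStep_le_one (hup : (up : ℝ) ≤ Real.sqrt N) (huc : (uc : ℝ) ≤ Real.sqrt N)
    (x : Fin N → Bool) : ∑' y, gaStep N βl βp βc ul up uc f x y ≤ 1 := by
  simp only [gaStep_eq_nested]
  refine ENNReal.tsum_tsum_mul_le_one (tsum_powMass_le_one _ _) fun P hP => ?_
  refine ENNReal.tsum_tsum_mul_le_one (tsum_powMass_le_one _ _) fun Q hQ => ?_
  refine ENNReal.tsum_tsum_mul_le_one (tsum_powMass_le_one _ _) fun lam _ => ?_
  refine ENNReal.tsum_tsum_mul_le_one (tsum_binomMass_le_one (by positivity)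
    (div_sqrt_le_one_of_powMass_ne_zero hP hup)) fun ℓ _ => ?_
  refine ENNReal.tsum_tsum_mul_le_one
    (tsum_bestOfMass_le_one f lam (tsum_mutMass_le_one x ℓ)) fun x' _ => ?_
  refine ENNReal.tsum_tsum_mul_le_one (tsum_bestOfMass_le_one f lam
    (tsum_crossMass_eq_one x x' (by positivity) (div_sqrt_le_one_of_powMass_ne_zero hQ huc)).le)
    fun yw _ => ?_
  unfold acceptMass
  split_ifs <;> simp

theorem gaStep_eq_zero_of_lt {x y : Fin N → Bool} (h : f y < f x) :
    gaStep N βl βp βc ul up uc f x y = 0 := by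
  have hreject : ∀ yw, acceptMass f x yw y = 0 := by
    intro yw
    unfold acceptMass
    split_ifs with hx hy hy <;> first | rfl | (subst hy; linarith)
  simp only [gaStep_eq_nested, hreject, mul_zero, tsum_zero]

theorem powMass_one_mul_le_gaStep (x y : Fin N → Bool) :
    powMass βp up 1 * powMass βc uc 1 * powMass βl ul 1 *
        ∑' ℓ, binomMass N (1 / Real.sqrt N) ℓ * lambdaOneStep f x ℓ (1 / Real.sqrt N) y
      ≤ gaStep N βl βp βc ul up uc f x y := by
  rw [gaStep_eq_nested, mul_assoc, mul_assoc]
  refine le_trans ?_ (ENNReal.le_tsum 1)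
  refine mul_le_mul_right (le_trans ?_ (ENNReal.le_tsum 1)) _
  refine mul_le_mul_right (le_trans ?_ (ENNReal.le_tsum 1)) _
  simp [bestOfMass_one, lambdaOneStep]

end Step

section LeadingOnes

variable {N : ℕ}

def leadingOnesCount (N : ℕ) (x : Fin N → Bool) : ℕ :=
  (univ.filter fun i => ∀ j : Fin N, j ≤ i → x j = true).card

theorem leadingOnes_eq_leadingOnesCount (x : Fin N → Bool) :
    leadingOnes N x = leadingOnesCount N x := rfl

theorem leadingOnesCount_eq_of_first_false {x : Fin N → Bool} {κ : Fin N} (hκ : x κ = false)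
    (hx : ∀ j < κ, x j = true) : leadingOnesCount N x = κ := by
  have hprefix : (univ.filter fun i => ∀ j ≤ i, x j = true) = Iio κ := by
    ext i
    simp only [mem_filter, mem_univ, true_and, mem_Iio]
    refine ⟨fun h => lt_of_not_ge fun hi => ?_, fun hi j hj => hx j (hj.trans_lt hi)⟩
    simp [h κ hi] at hκ
  rw [leadingOnesCount, hprefix, Fin.card_Iio]

theorem exists_first_false {x : Fin N → Bool} (hx : x ≠ fun _ => true) :
    ∃ κ, x κ = false ∧ ∀ j < κ, x j = true := by
  have hne : (univ.filter fun i => x i = false).Nonempty := by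
    obtain ⟨i, hi⟩ := Function.ne_iff.1 hx
    exact ⟨i, by simpa using hi⟩
  obtain ⟨κ, hκ, hmin⟩ := (univ.filter fun i => x i = false).exists_min_image id hne
  refine ⟨κ, (mem_filter.1 hκ).2, fun j hj => ?_⟩
  by_contra h
  exact (hmin j (by simpa using h)).not_gt hj

theorem leadingOnesCount_lt_iff {x : Fin N → Bool} :
    leadingOnesCount N x < N ↔ x ≠ fun _ => true := by
  refine ⟨fun h hx => by simp [hx, leadingOnesCount] at h, fun hx => ?_⟩
  obtain ⟨κ, hκ, hlt⟩ := exists_first_false hx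
  rw [leadingOnesCount_eq_of_first_false hκ hlt]
  exact κ.isLt

theorem lt_leadingOnesCount_of_prefix {z : Fin N → Bool} {κ : Fin N}
    (h : ∀ j ≤ κ, z j = true) : (κ : ℕ) < leadingOnesCount N z :=
  calc (κ : ℕ) < (Iic κ).card := by simp
    _ ≤ _ := card_le_card fun i hi =>
        mem_filter.2 ⟨mem_univ _, fun j hj => h j (hj.trans (mem_Iic.1 hi))⟩

theorem ofReal_div_mul_le_sum_leadingOnesCount_lt {x : Fin N → Bool} {κ : Fin N} (hκ : x κ = false)
    (hx : ∀ j < κ, x j = true) {ℓ : ℕ} (hℓ : ℓ ≤ N) {c : ℝ} (hc0 : 0 ≤ c) (hc1 : c ≤ 1) :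
    ENNReal.ofReal ((ℓ : ℝ) / N * (c * (1 - c) ^ ℓ)) ≤
      ∑ y ∈ univ.filter (fun y => leadingOnesCount N x < leadingOnesCount N y),
        lambdaOneStep (leadingOnes N) x ℓ c y := by
  set S := univ.filter fun y => leadingOnesCount N x < leadingOnesCount N y
  have haccept : ∀ yw ∈ S, 1 ≤ ∑ y ∈ S, acceptMass (leadingOnes N) x yw y := by
    intro yw hyw
    have hle : leadingOnes N x ≤ leadingOnes N yw := by
      simp only [leadingOnes_eq_leadingOnesCount, Nat.cast_le]
      exact (mem_filter.1 hyw).2.le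
    simp [acceptMass, hle, hyw]
  have hcross : ∀ x', x' κ ≠ x κ → mutMass x ℓ x' ≠ 0 →
      ENNReal.ofReal (c * (1 - c) ^ ℓ) ≤ ∑ yw ∈ S, crossMass x x' c yw := by
    intro x' hx'κ hmut
    have hdiff : (univ.filter fun i => x' i ≠ x i).card = ℓ := by
      by_contra h
      exact hmut (if_neg h)
    refine (ofReal_mul_pow_le_sum_crossMass x x' hc0 hc1 hκ hx (by simpa [hκ] using hx'κ)
      hdiff.le).trans (sum_le_sum_of_subset fun z hz => mem_filter.2 ⟨mem_univ _, ?_⟩)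
    rw [leadingOnesCount_eq_of_first_false hκ hx]
    exact lt_leadingOnesCount_of_prefix (mem_filter.1 hz).2
  calc ENNReal.ofReal ((ℓ : ℝ) / N * (c * (1 - c) ^ ℓ))
      ≤ (∑ x' ∈ univ.filter fun z => z κ ≠ x κ, mutMass x ℓ x') *
          ENNReal.ofReal (c * (1 - c) ^ ℓ) := by
        rw [ENNReal.ofReal_mul (by positivity)]
        exact mul_le_mul_left (ofReal_div_le_sum_mutMass_ne x κ hℓ) _
    _ ≤ ∑ x' ∈ univ.filter fun z => z κ ≠ x κ, mutMass x ℓ x' * ∑ yw ∈ S, crossMass x x' c yw := by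
        rw [sum_mul]
        refine sum_le_sum fun x' hx' => ?_
        by_cases hmut : mutMass x ℓ x' = 0
        · simp [hmut]
        · exact mul_le_mul_right (hcross x' (mem_filter.1 hx').2 hmut) _
    _ ≤ ∑ x', mutMass x ℓ x' * ∑ yw, crossMass x x' c yw *
          ∑ y ∈ S, acceptMass (leadingOnes N) x yw y := by
        refine (sum_le_sum_of_subset (subset_univ _)).trans (sum_le_sum fun x' _ => ?_)
        refine mul_le_mul_right ((sum_le_sum fun yw hyw => ?_).trans
          (sum_le_sum_of_subset (subset_univ S))) _
        exact le_mul_of_one_le_right' (haccept yw hyw)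
    _ = _ := by
        simp only [lambdaOneStep, tsum_fintype, mul_sum]
        exact (sum_comm.trans (sum_congr rfl fun x' _ => sum_comm)).symm

end LeadingOnes

theorem ofReal_one_div_le_sum_tsum_binomMass_mul_lambdaOneStep {N : ℕ} (hN : 2 ≤ N)
    {x : Fin N → Bool} (hx : x ≠ fun _ => true) :
    ENNReal.ofReal (1 / (16 * N)) ≤
      ∑ y ∈ univ.filter (fun y => leadingOnesCount N x < leadingOnesCount N y),
        ∑' ℓ, binomMass N (1 / Real.sqrt N) ℓ *
          lambdaOneStep (leadingOnes N) x ℓ (1 / Real.sqrt N) y := by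
  obtain ⟨κ, hκ, hxκ⟩ := exists_first_false hx
  set c := 1 / Real.sqrt N
  have hc0 : 0 ≤ c := by positivity
  have hc1 : c ≤ 1 := div_le_one_of_le₀
    (Real.one_le_sqrt.2 (by exact_mod_cast (by omega : 1 ≤ N))) (Real.sqrt_nonneg _)
  have hb : ∀ ℓ ∈ range (N + 1), 0 ≤ (N.choose ℓ : ℝ) * c ^ ℓ * (1 - c) ^ (N - ℓ) :=
    fun ℓ _ => mul_nonneg (by positivity) (pow_nonneg (by linarith) _)
  calc ENNReal.ofReal (1 / (16 * N))
      ≤ ∑ ℓ ∈ range (N + 1), ENNReal.ofReal ((N.choose ℓ : ℝ) * c ^ ℓ * (1 - c) ^ (N - ℓ)) *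
          ENNReal.ofReal ((ℓ : ℝ) / N * (c * (1 - c) ^ ℓ)) := by
        rw [sum_congr rfl fun ℓ hℓ => (ENNReal.ofReal_mul (hb ℓ hℓ)).symm,
          ← ENNReal.ofReal_sum_of_nonneg fun ℓ hℓ =>
            mul_nonneg (hb ℓ hℓ) (by have := pow_nonneg (sub_nonneg.2 hc1) ℓ; positivity)]
        exact ENNReal.ofReal_le_ofReal (one_div_sixteen_mul_le_sum_binom_mul_success hN)
    _ ≤ ∑ ℓ ∈ range (N + 1), binomMass N c ℓ *
          ∑ y ∈ univ.filter (fun y => leadingOnesCount N x < leadingOnesCount N y),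
            lambdaOneStep (leadingOnes N) x ℓ c y := by
        refine sum_le_sum fun ℓ hℓ => ?_
        have hℓN := Nat.lt_succ_iff.1 (mem_range.1 hℓ)
        rw [binomMass, if_pos hℓN]
        exact mul_le_mul_right (ofReal_div_mul_le_sum_leadingOnesCount_lt hκ hxκ hℓN hc0 hc1) _
    _ ≤ _ := by
        simp only [mul_sum]
        rw [sum_comm]
        exact sum_le_sum fun y _ => ENNReal.sum_le_tsum _

theorem ofReal_inv_le_sum_gaStep_leadingOnesCount_lt {N : ℕ} (hN : 2 ≤ N) {βl βp βc : ℝ}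
    (hβl : 1 < βl) (hβp : 1 < βp) (hβc : 1 < βc) {ul up uc : ℕ} (hul : 1 ≤ ul) (hup : 1 ≤ up)
    (huc : 1 ≤ uc) {x : Fin N → Bool} (hx : x ≠ fun _ => true) :
    ENNReal.ofReal ((16 * powLawNorm βp * powLawNorm βc * powLawNorm βl * N)⁻¹) ≤
      ∑ y ∈ univ.filter (fun y => leadingOnesCount N x < leadingOnesCount N y),
        gaStep N βl βp βc ul up uc (leadingOnes N) x y := by
  have hZ : ∀ {β : ℝ}, 1 < β → 0 ≤ (powLawNorm β)⁻¹ :=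
    fun hβ => inv_nonneg.2 (zero_le_one.trans (one_le_powLawNorm hβ))
  calc ENNReal.ofReal ((16 * powLawNorm βp * powLawNorm βc * powLawNorm βl * N)⁻¹)
      = ENNReal.ofReal (powLawNorm βp)⁻¹ * ENNReal.ofReal (powLawNorm βc)⁻¹ *
          ENNReal.ofReal (powLawNorm βl)⁻¹ * ENNReal.ofReal (1 / (16 * N)) := by
        rw [← ENNReal.ofReal_mul (hZ hβp), ← ENNReal.ofReal_mul (mul_nonneg (hZ hβp) (hZ hβc)),
          ← ENNReal.ofReal_mul (mul_nonneg (mul_nonneg (hZ hβp) (hZ hβc)) (hZ hβl))]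
        congr 1
        field_simp
    _ ≤ powMass βp up 1 * powMass βc uc 1 * powMass βl ul 1 *
          ∑ y ∈ univ.filter (fun y => leadingOnesCount N x < leadingOnesCount N y),
            ∑' ℓ, binomMass N (1 / Real.sqrt N) ℓ *
              lambdaOneStep (leadingOnes N) x ℓ (1 / Real.sqrt N) y := by
        gcongr
        exacts [ofReal_inv_powLawNorm_le_powMass_one hβp hup,
          ofReal_inv_powLawNorm_le_powMass_one hβc huc,
          ofReal_inv_powLawNorm_le_powMass_one hβl hul,
          ofReal_one_div_le_sum_tsum_binomMass_mul_lambdaOneStep hN hx]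
    _ ≤ _ := by
        rw [mul_sum]
        exact sum_le_sum fun y _ => powMass_one_mul_le_gaStep _ x y

section FitnessLevels

variable {σ : Type*} [Fintype σ] {K : σ → σ → ℝ≥0∞} {g : σ → ℕ} {μ : ℕ → σ → ℝ≥0∞} {δ : ℝ≥0∞}

theorem sum_le_level_succ_add_le (hμ : ∀ t y, μ (t + 1) y = ∑ x, μ t x * K x y)
    (hK : ∀ x, ∑ y, K x y ≤ 1) (hmono : ∀ x y, g y < g x → K x y = 0) {k : ℕ}
    (hprog : ∀ x, g x = k → δ ≤ ∑ y ∈ univ.filter (fun y => k < g y), K x y) (t : ℕ) :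
    ∑ y ∈ univ.filter (fun y => g y ≤ k), μ (t + 1) y +
        δ * ∑ x ∈ univ.filter (fun x => g x = k), μ t x ≤
      ∑ x ∈ univ.filter (fun x => g x ≤ k), μ t x := by
  have hx : ∀ x, ∑ y ∈ univ.filter (fun y => g y ≤ k), K x y + (if g x = k then δ else 0) ≤
      if g x ≤ k then 1 else 0 := by
    intro x
    have hsplit := sum_filter_add_sum_filter_not univ (fun y => g y ≤ k) (K x)
    simp only [not_le] at hsplit
    rcases lt_trichotomy (g x) k with hlt | heq | hgt
    · simp only [hlt.ne, hlt.le, if_false, if_true, add_zero]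
      exact (le_self_add).trans (hsplit.trans_le (hK x))
    · simp only [heq, le_refl, if_true]
      exact (add_le_add le_rfl (hprog x heq)).trans (hsplit.trans_le (hK x))
    · simp only [hgt.ne', not_le.2 hgt, if_false, add_zero, nonpos_iff_eq_zero]
      exact sum_eq_zero fun y hy => hmono x y (lt_of_le_of_lt (mem_filter.1 hy).2 hgt)
  calc ∑ y ∈ univ.filter (fun y => g y ≤ k), μ (t + 1) y +
        δ * ∑ x ∈ univ.filter (fun x => g x = k), μ t x
      = ∑ x, μ t x * (∑ y ∈ univ.filter (fun y => g y ≤ k), K x y +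
          (if g x = k then δ else 0)) := by
        simp only [hμ, mul_add, sum_add_distrib, mul_sum, mul_ite, mul_zero, ← sum_filter]
        rw [sum_comm]
        simp only [mul_comm δ]
    _ ≤ ∑ x, μ t x * (if g x ≤ k then 1 else 0) := sum_le_sum fun x _ => mul_le_mul_right (hx x) _
    _ = ∑ x ∈ univ.filter (fun x => g x ≤ k), μ t x := by simp [sum_filter]

theorem tsum_sum_level_le_inv (hμ : ∀ t y, μ (t + 1) y = ∑ x, μ t x * K x y)
    (hμ0 : ∑ x, μ 0 x ≤ 1) (hK : ∀ x, ∑ y, K x y ≤ 1) (hmono : ∀ x y, g y < g x → K x y = 0)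
    {k : ℕ} (hprog : ∀ x, g x = k → δ ≤ ∑ y ∈ univ.filter (fun y => k < g y), K x y) :
    ∑' t, ∑ x ∈ univ.filter (fun x => g x = k), μ t x ≤ δ⁻¹ := by
  have hbound : ∀ T, ∑ y ∈ univ.filter (fun y => g y ≤ k), μ T y +
      δ * ∑ t ∈ range T, ∑ x ∈ univ.filter (fun x => g x = k), μ t x ≤ 1 := by
    intro T
    induction T with
    | zero => simpa using (sum_le_sum_of_subset (filter_subset _ _)).trans hμ0
    | succ T ih =>
      refine le_trans ?_ ih
      rw [sum_range_succ, mul_add, ← add_assoc, add_right_comm]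
      exact add_le_add (sum_le_level_succ_add_le hμ hK hmono hprog T) le_rfl
  refine ENNReal.tsum_le_of_sum_range_le fun T => ENNReal.le_inv_iff_mul_le.2 ?_
  rw [mul_comm]
  exact le_add_self.trans (hbound T)

/-- The fitness-level method; `∑' t, ∑ x ∈ _, μ t x` is the expected time spent below level `m`. -/
theorem tsum_sum_filter_lt_le_mul_inv (hμ : ∀ t y, μ (t + 1) y = ∑ x, μ t x * K x y)
    (hμ0 : ∑ x, μ 0 x ≤ 1) (hK : ∀ x, ∑ y, K x y ≤ 1) (hmono : ∀ x y, g y < g x → K x y = 0)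
    {m : ℕ} (hprog : ∀ x, g x < m → δ ≤ ∑ y ∈ univ.filter (fun y => g x < g y), K x y) :
    ∑' t, ∑ x ∈ univ.filter (fun x => g x < m), μ t x ≤ m * δ⁻¹ := by
  have hlevels : ∀ t, ∑ x ∈ univ.filter (fun x => g x < m), μ t x =
      ∑ k ∈ range m, ∑ x ∈ univ.filter (fun x => g x = k), μ t x := fun t => by
    rw [← sum_fiberwise_of_maps_to (g := g) (t := range m) fun x hx => by simpa using hx]
    exact sum_congr rfl fun k hk => by
      rw [filter_filter]
      exact sum_congr (filter_congr fun x _ => by simp only [mem_range] at hk; omega) fun _ _ => rfl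
  simp only [hlevels]
  rw [Summable.tsum_finsetSum fun _ _ => ENNReal.summable]
  calc ∑ k ∈ range m, ∑' t, ∑ x ∈ univ.filter (fun x => g x = k), μ t x
      ≤ ∑ _k ∈ range m, δ⁻¹ := sum_le_sum fun k hk => tsum_sum_level_le_inv hμ hμ0 hK hmono
        fun x hx => hx ▸ hprog x (hx ▸ mem_range.1 hk)
    _ = m * δ⁻¹ := by simp

end FitnessLevels

/-- If `βλ > 1`, `βp > 1` and `βc > 1`, then there is a constant
`C > 0` (depending only on `βλ, βp, βc`) such that for all `N ≥ 2`, `uλ ≥ 1` and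
`1 ≤ up, uc ≤ √N`, the heavy-tailed `(1+(λ,λ))` GA maximizing LeadingOnes on
`{0,1}^N` satisfies `E[T_I] ≤ C·N²`, where `T_I` is the first iteration index
`t ≥ 0` at which the current solution `x_t` is the all-ones string. -/
theorem heavyTailedGA_leadingOnes_runtime (βl βp βc : ℝ)
    (hβl : 1 < βl) (hβp : 1 < βp) (hβc : 1 < βc) :
    ∃ C : ℝ, 0 < C ∧ ∀ N : ℕ, 2 ≤ N → ∀ ul up uc : ℕ,
      1 ≤ ul → 1 ≤ up → (up : ℝ) ≤ Real.sqrt N → 1 ≤ uc → (uc : ℝ) ≤ Real.sqrt N →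
      gaExpectedIterations N βl βp βc ul up uc (leadingOnes N)
          (fun x => x = fun _ => true)
        ≤ ENNReal.ofReal (C * N ^ 2) := by
  have hZ := fun {β : ℝ} (hβ : 1 < β) => zero_lt_one.trans_le (one_le_powLawNorm hβ)
  set C := 16 * powLawNorm βp * powLawNorm βc * powLawNorm βl
  have hC : 0 < C := by have := hZ hβp; have := hZ hβc; have := hZ hβl; positivity
  refine ⟨C, hC, fun N hN ul up uc hul hup1 hup huc1 huc => ?_⟩
  have hCN : 0 < C * N := mul_pos hC (by positivity)
  have hexp : gaExpectedIterations N βl βp βc ul up uc (leadingOnes N) (fun x => x = fun _ => true)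
      = ∑' t, ∑ x ∈ univ.filter (fun x => leadingOnesCount N x < N),
          gaMarginal N βl βp βc ul up uc (leadingOnes N) t x := by
    simp only [gaExpectedIterations, tsum_fintype, sum_filter, leadingOnesCount_lt_iff, ite_not]
    congr!
  have hinit : ∑ x, gaMarginal N βl βp βc ul up uc (leadingOnes N) 0 x ≤ 1 := by
    simp [gaMarginal, ENNReal.mul_inv_le_one]
  calc _ = _ := hexp
    _ ≤ N * (ENNReal.ofReal (C * N)⁻¹)⁻¹ :=
        tsum_sum_filter_lt_le_mul_inv (fun t y => tsum_fintype _) hinit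
          (fun x => (tsum_fintype _).symm.trans_le (tsum_gaStep_le_one _ hup huc x))
          (fun x y h => gaStep_eq_zero_of_lt _ (Nat.cast_lt.2 h))
          fun x hx => ofReal_inv_le_sum_gaStep_leadingOnesCount_lt hN hβl hβp hβc hul hup1 huc1
            (leadingOnesCount_lt_iff.1 hx)
    _ = ENNReal.ofReal (C * N ^ 2) := by
        rw [ENNReal.ofReal_inv_of_pos hCN, inv_inv, ← ENNReal.ofReal_natCast,
          ← ENNReal.ofReal_mul (by positivity)]
        ring_nf
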